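/- arXiv:2303.14477 — 5 statements merged into one kernel-verified Lean document; each statement's English description precedes it below -/
import Mathlib

section
/- Let u be convex on an open convex set X ⊆ ℝⁿ and suppose there exists a quadratic function φ such that u(y) ≤ φ(y) for all y near x ∈ X, with equality at x. Then u is differentiable at x and Du(x) = Dφ(x). -/
open scoped RealInnerProductSpace
open Filter Topology

set_option maxHeartbeats 1000000 in
theorem stmt_7 {n : ℕ} {X : Set (EuclideanSpace ℝ (Fin n))}
    (hXo : IsOpen X) (hXc : Convex ℝ X) {u : EuclideanSpace ℝ (Fin n) → ℝ}
    (hu : ConvexOn ℝ X u) {x : EuclideanSpace ℝ (Fin n)} (hx : x ∈ X)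
    (c : ℝ) (b : EuclideanSpace ℝ (Fin n))
    (A : EuclideanSpace ℝ (Fin n) →L[ℝ] EuclideanSpace ℝ (Fin n))
    (hAsymm : ∀ v w, ⟪A v, w⟫ = ⟪v, A w⟫)
    (hcontact : ∀ᶠ y in 𝓝 x, u y ≤ c + ⟪b, y⟫ + (1/2) * ⟪A y, y⟫)
    (heq : u x = c + ⟪b, x⟫ + (1/2) * ⟪A x, x⟫) :
    HasGradientAt u (b + A x) x := by
  have key : ∀ d : EuclideanSpace ℝ (Fin n),
      c + ⟪b, x + d⟫ + (1/2) * ⟪A (x + d), x + d⟫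
        = u x + ⟪b + A x, d⟫ + (1/2) * ⟪A d, d⟫ := by
    intro d
    have h1 : ⟪A d, x⟫ = ⟪A x, d⟫ := by rw [hAsymm]; exact real_inner_comm _ _
    simp only [map_add, inner_add_left, inner_add_right, heq]
    rw [h1]; ring
  rw [hasGradientAt_iff_isLittleO, Asymptotics.isLittleO_iff]
  intro ε hε
  have hA : (0:ℝ) < ‖A‖ + 1 := by positivity
  set δ := 2 * ε / (‖A‖ + 1) with hδdef
  have hδ : 0 < δ := by positivity
  have hrefl0 : Filter.Tendsto (fun y : EuclideanSpace ℝ (Fin n) => x + (x - y))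
      (𝓝 x) (𝓝 x) := by
    have hc : Continuous (fun y : EuclideanSpace ℝ (Fin n) => x + (x - y)) :=
      continuous_const.add (continuous_const.sub continuous_id)
    have := hc.tendsto x
    simpa using this
  have hrefl : ∀ᶠ y in 𝓝 x, u (x + (x - y)) ≤ c + ⟪b, x + (x - y)⟫ +
      (1/2) * ⟪A (x + (x - y)), x + (x - y)⟫ := hrefl0.eventually hcontact
  have hX1 : ∀ᶠ y in 𝓝 x, y ∈ X := hXo.mem_nhds hx
  have hX2 : ∀ᶠ y in 𝓝 x, x + (x - y) ∈ X := hrefl0.eventually hX1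
  have hsmall : ∀ᶠ y in 𝓝 x, dist y x < δ := by
    filter_upwards [Metric.ball_mem_nhds x hδ] with y hy using hy
  filter_upwards [hcontact, hrefl, hX1, hX2, hsmall] with y h1 h2 hy hz hd
  have e : x + (y - x) = y := by abel
  have hup : u y ≤ u x + ⟪b + A x, y - x⟫ + (1/2) * ⟪A (y - x), y - x⟫ := by
    have hk := key (y - x)
    rw [e] at hk
    linarith [h1, hk.symm.trans_le (le_of_eq rfl)]
  have hneg : (x - y) = -(y - x) := by abel
  have hQ : ⟪A (x - y), x - y⟫ = ⟪A (y - x), y - x⟫ := by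
    rw [hneg, map_neg, inner_neg_neg]
  have hG : ⟪b + A x, x - y⟫ = -⟪b + A x, y - x⟫ := by
    rw [hneg, inner_neg_right]
  have hk2 := key (x - y)
  rw [hQ, hG] at hk2
  have hzle : u (x + (x - y)) ≤ u x - ⟪b + A x, y - x⟫ +
      (1/2) * ⟪A (y - x), y - x⟫ := by linarith [h2, hk2]
  have hcv := hu.2 hy hz (by norm_num : (0:ℝ) ≤ 1/2) (by norm_num : (0:ℝ) ≤ 1/2)
    (by norm_num : (1/2:ℝ) + 1/2 = 1)
  have hmid : (1/2 : ℝ) • y + (1/2 : ℝ) • (x + (x - y)) = x := by module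
  rw [hmid] at hcv
  simp only [smul_eq_mul] at hcv
  have hlow : u x + ⟪b + A x, y - x⟫ - (1/2) * ⟪A (y - x), y - x⟫ ≤ u y := by
    linarith [hcv, hzle]
  have hQbound : |⟪A (y - x), y - x⟫| ≤ ‖A‖ * ‖y - x‖ * ‖y - x‖ := by
    calc |⟪A (y - x), y - x⟫| ≤ ‖A (y - x)‖ * ‖y - x‖ := abs_real_inner_le_norm _ _
      _ ≤ ‖A‖ * ‖y - x‖ * ‖y - x‖ := by
          have := A.le_opNorm (y - x)
          nlinarith [norm_nonneg (y - x)]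
  have hnd : ‖y - x‖ < δ := by rwa [dist_eq_norm] at hd
  have hnn : (0:ℝ) ≤ ‖y - x‖ := norm_nonneg _
  have hAnn : (0:ℝ) ≤ ‖A‖ := norm_nonneg _
  have hfin : (1/2) * (‖A‖ * ‖y - x‖ * ‖y - x‖) ≤ ε * ‖y - x‖ := by
    have hδle : ‖A‖ * δ ≤ 2 * ε := by
      rw [hδdef]
      have h1 : ‖A‖ / (‖A‖ + 1) ≤ 1 := by
        rw [div_le_one hA]; linarith
      calc ‖A‖ * (2 * ε / (‖A‖ + 1)) = (2 * ε) * (‖A‖ / (‖A‖ + 1)) := by ring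
        _ ≤ (2 * ε) * 1 := by
            apply mul_le_mul_of_nonneg_left h1 (by linarith)
        _ = 2 * ε := by ring
    have h3 : ‖A‖ * ‖y - x‖ ≤ 2 * ε :=
      le_trans (mul_le_mul_of_nonneg_left (le_of_lt hnd) hAnn) hδle
    have h4 := mul_le_mul_of_nonneg_right h3 hnn
    linarith [h4]
  rw [Real.norm_eq_abs]
  rw [abs_le]
  constructor
  · have hQa := le_abs_self ⟪A (y - x), y - x⟫
    linarith [hlow, hQbound, hfin, hQa]
  · have hQb := le_abs_self ⟪A (y - x), y - x⟫
    linarith [hup, hQbound, hfin, hQb]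
end

section
/- A function u : ℝⁿ → ℝ is differentiable with λ-Lipschitz gradient (i.e. u ∈ C^{1,1} with Lipschitz constant λ for Du) if and only if both u + (λ/2)|·|² and −u + (λ/2)|·|² are convex, i.e. both u and −u are λ-quasi-convex. -/
/-! Write `F = u + (λ/2)‖·‖²` and `G = -u + (λ/2)‖·‖²`.

If `∇u` is `λ`-Lipschitz, then `∇F = ∇u + λ • id` is monotone by Cauchy–Schwarz, so `F` is convex
along every line, hence convex; the same holds for `G`.

Conversely, let `F` and `G` be convex. Their sum `λ‖·‖²` is smooth. The one-sided directional
derivatives of `F` and of `G` are sublinear, and they add up to a linear map, so both are linear.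
The first-order remainder of `F` lies between `0` and the remainder of `F + G`, so `F` is
differentiable, and hence so is `u`. Convexity of `F` and `G` then gives
`0 ≤ F y - F x - ⟪∇F x, y - x⟫ ≤ λ‖y - x‖²`. The co-coercivity argument for convex functions
with such a quadratic upper bound gives `‖∇F x - ∇F y‖² ≤ 2λ⟪∇F x - ∇F y, x - y⟫`, which says
exactly that `‖∇u x - ∇u y‖ ≤ λ‖x - y‖`. -/

open scoped RealInnerProductSpace
open Set Filter Topology

lemma le_of_hasDerivWithinAt_Ioi_of_le {φ ψ : ℝ → ℝ} {a b t₀ : ℝ}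
    (hφ : HasDerivWithinAt φ a (Ioi t₀) t₀) (hψ : HasDerivWithinAt ψ b (Ioi t₀) t₀)
    (h₀ : φ t₀ = ψ t₀) (h : ∀ t > t₀, φ t ≤ ψ t) : a ≤ b := by
  rw [hasDerivWithinAt_iff_tendsto_slope' self_notMem_Ioi] at hφ hψ
  refine le_of_tendsto_of_tendsto hφ hψ (eventually_nhdsWithin_of_forall fun t (ht : t₀ < t) => ?_)
  rw [slope_def_field, slope_def_field, h₀]
  gcongr
  exact h t ht

section RightDirDeriv

variable {E : Type*} [AddCommGroup E] [Module ℝ E] {f g : E → ℝ} {x : E}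

lemma ConvexOn.comp_add_smul (hf : ConvexOn ℝ univ f) (x v : E) :
    ConvexOn ℝ univ (fun t : ℝ => f (x + t • v)) := by
  simpa [Function.comp_def] using
    (hf.translate_right x).comp_linearMap (LinearMap.toSpanSingleton ℝ E v)

noncomputable def rightDirDeriv (f : E → ℝ) (x v : E) : ℝ :=
  derivWithin (fun t : ℝ => f (x + t • v)) (Ioi 0) 0

lemma rightDirDeriv_eq_of_hasDerivWithinAt {v : E} {a : ℝ}
    (h : HasDerivWithinAt (fun t : ℝ => f (x + t • v)) a (Ioi 0) 0) : rightDirDeriv f x v = a :=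
  h.derivWithin (uniqueDiffWithinAt_Ioi 0)

@[simp] lemma rightDirDeriv_zero : rightDirDeriv f x 0 = 0 := by
  simp [rightDirDeriv]

namespace ConvexOn

variable (hf : ConvexOn ℝ univ f)
include hf

lemma hasDerivWithinAt_rightDirDeriv (x v : E) :
    HasDerivWithinAt (fun t : ℝ => f (x + t • v)) (rightDirDeriv f x v) (Ioi 0) 0 :=
  (hf.comp_add_smul x v).hasDerivWithinAt_rightDeriv_of_mem_interior (by simp)

lemma rightDirDeriv_le_sub (x v : E) : rightDirDeriv f x v ≤ f (x + v) - f x := by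
  simpa [rightDirDeriv, slope_def_field] using
    (hf.comp_add_smul x v).rightDeriv_le_slope_of_mem_interior (by simp) (mem_univ 1) one_pos

lemma rightDirDeriv_smul {c : ℝ} (hc : 0 < c) (x v : E) :
    rightDirDeriv f x (c • v) = c * rightDirDeriv f x v := by
  refine rightDirDeriv_eq_of_hasDerivWithinAt ?_
  have := (hf.hasDerivWithinAt_rightDirDeriv x v).comp_of_eq 0
    ((hasDerivAt_id 0).const_mul c).hasDerivWithinAt (s := Ioi 0) (fun t ht => mul_pos hc ht)
    (mul_zero c).symm
  rw [show c * rightDirDeriv f x v = rightDirDeriv f x v * (c * 1) by ring,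
    show (fun t : ℝ => f (x + t • c • v)) = (fun t => f (x + t • v)) ∘ fun t => c * id t by
      ext t
      simp only [Function.comp_apply, id, smul_smul, mul_comm]]
  exact this

lemma rightDirDeriv_add_le (x v w : E) :
    rightDirDeriv f x (v + w) ≤ rightDirDeriv f x v + rightDirDeriv f x w := by
  have hψ := ((hf.hasDerivWithinAt_rightDirDeriv x ((2 : ℝ) • v)).const_mul (1 / 2)).add
    ((hf.hasDerivWithinAt_rightDirDeriv x ((2 : ℝ) • w)).const_mul (1 / 2))
  rw [hf.rightDirDeriv_smul two_pos, hf.rightDirDeriv_smul two_pos] at hψ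
  convert le_of_hasDerivWithinAt_Ioi_of_le (hf.hasDerivWithinAt_rightDirDeriv x (v + w)) hψ
    (by simp only [smul_add, zero_smul, add_zero, one_div, Pi.add_apply]; ring)
    (fun t _ => ?_) using 1
  · ring
  · have := hf.2 (mem_univ (x + t • (2 : ℝ) • v)) (mem_univ (x + t • (2 : ℝ) • w))
      (by norm_num : (0 : ℝ) ≤ 1 / 2) (by norm_num : (0 : ℝ) ≤ 1 / 2) (by norm_num)
    rw [show (1 / 2 : ℝ) • (x + t • (2 : ℝ) • v) + (1 / 2 : ℝ) • (x + t • (2 : ℝ) • w)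
      = x + t • (v + w) by module] at this
    simpa using this

lemma rightDirDeriv_add (hg : ConvexOn ℝ univ g) (x v : E) :
    rightDirDeriv (f + g) x v = rightDirDeriv f x v + rightDirDeriv g x v :=
  rightDirDeriv_eq_of_hasDerivWithinAt
    ((hf.hasDerivWithinAt_rightDirDeriv x v).add (hg.hasDerivWithinAt_rightDirDeriv x v))

end ConvexOn

end RightDirDeriv

section Differentiability

variable {E : Type*} [NormedAddCommGroup E] [NormedSpace ℝ E] {f g : E → ℝ} {f' L : E →L[ℝ] ℝ}
  {x : E}

lemma HasFDerivAt.hasDerivAt_comp_add_smul {v : E} {t : ℝ} (h : HasFDerivAt f f' (x + t • v)) :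
    HasDerivAt (fun s : ℝ => f (x + s • v)) (f' v) t := by
  have := h.comp_hasDerivAt t (((hasDerivAt_id t).smul_const v).const_add x)
  rwa [one_smul] at this

lemma rightDirDeriv_eq_of_hasFDerivAt (h : HasFDerivAt f f' x) (v : E) :
    rightDirDeriv f x v = f' v :=
  rightDirDeriv_eq_of_hasDerivWithinAt
    (HasFDerivAt.hasDerivAt_comp_add_smul (by simpa using h)).hasDerivWithinAt

lemma ConvexOn.le_sub_of_hasFDerivAt (hf : ConvexOn ℝ univ f) (h : HasFDerivAt f f' x) (v : E) :
    f' v ≤ f (x + v) - f x :=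
  rightDirDeriv_eq_of_hasFDerivAt h v ▸ hf.rightDirDeriv_le_sub x v

lemma ConvexOn.rightDirDeriv_add_rightDirDeriv (hf : ConvexOn ℝ univ f)
    (hg : ConvexOn ℝ univ g) (hfg : HasFDerivAt (f + g) L x) (v : E) :
    rightDirDeriv f x v + rightDirDeriv g x v = L v := by
  rw [← hf.rightDirDeriv_add hg, rightDirDeriv_eq_of_hasFDerivAt hfg]

lemma ConvexOn.isLinearMap_rightDirDeriv (hf : ConvexOn ℝ univ f) (hg : ConvexOn ℝ univ g)
    (hfg : HasFDerivAt (f + g) L x) : IsLinearMap ℝ (rightDirDeriv f x) := by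
  have hsum := hf.rightDirDeriv_add_rightDirDeriv hg hfg
  have hadd : ∀ v w, rightDirDeriv f x (v + w) = rightDirDeriv f x v + rightDirDeriv f x w := by
    intro v w
    linarith [hf.rightDirDeriv_add_le x v w, hg.rightDirDeriv_add_le x v w, hsum v, hsum w,
      hsum (v + w), L.map_add v w]
  have hneg : ∀ v, rightDirDeriv f x (-v) = -rightDirDeriv f x v := fun v => by
    linarith [hadd v (-v), show rightDirDeriv f x (v + -v) = 0 by simp]
  refine ⟨hadd, fun c v => ?_⟩
  rcases lt_trichotomy c 0 with hc | rfl | hc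
  · rw [show c • v = -((-c) • v) by module, hneg, hf.rightDirDeriv_smul (neg_pos.2 hc),
      smul_eq_mul]
    ring
  · simp
  · exact hf.rightDirDeriv_smul hc x v

theorem ConvexOn.differentiableAt_of_add [FiniteDimensional ℝ E] (hf : ConvexOn ℝ univ f)
    (hg : ConvexOn ℝ univ g) (hfg : DifferentiableAt ℝ (f + g) x) : DifferentiableAt ℝ f x := by
  have hL := hfg.hasFDerivAt
  refine ⟨(hf.isLinearMap_rightDirDeriv hg hL).mk'.toContinuousLinearMap, ?_⟩
  rw [hasFDerivAt_iff_isLittleO_nhds_zero] at hL ⊢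
  refine (Asymptotics.isBigO_of_le _ fun v => ?_).trans_isLittleO hL
  have hsum := hf.rightDirDeriv_add_rightDirDeriv hg hfg.hasFDerivAt v
  have hfv := hf.rightDirDeriv_le_sub x v
  have hgv := hg.rightDirDeriv_le_sub x v
  simp only [Real.norm_eq_abs, Pi.add_apply, LinearMap.coe_toContinuousLinearMap',
    IsLinearMap.mk'_apply]
  exact abs_le_abs_of_nonneg (by linarith) (by linarith)

end Differentiability

section Cocoercive

variable {E : Type*} [NormedAddCommGroup E] [InnerProductSpace ℝ E] {F : E → ℝ} {P : E → E}
  {μ : ℝ}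

lemma norm_sub_sq_le_four_mul_of_pos (hμ : 0 < μ) (hlow : ∀ x y, ⟪P x, y - x⟫ ≤ F y - F x)
    (hup : ∀ x y, F y - F x ≤ ⟪P x, y - x⟫ + μ * ‖y - x‖ ^ 2) (a b : E) :
    ‖P a - P b‖ ^ 2 ≤ 4 * μ * (F a - F b - ⟪P b, a - b⟫) := by
  -- the step length `c = 1 / (2μ)` maximizes `c - μ c²`
  set c := (2 * μ)⁻¹
  set d := P b - P a
  have h1 := hlow b (a + c • d)
  have h2 := hup a (a + c • d)
  rw [show a + c • d - b = (a - b) + c • d by abel, inner_add_right, real_inner_smul_right] at h1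
  rw [add_sub_cancel_left, real_inner_smul_right, norm_smul, mul_pow, Real.norm_eq_abs, sq_abs]
    at h2
  have hd : ⟪P b, d⟫ - ⟪P a, d⟫ = ‖d‖ ^ 2 := by
    rw [← inner_sub_left, real_inner_self_eq_norm_sq]
  have hc : 4 * μ * (c - μ * c ^ 2) = 1 := by
    simp only [c]
    field_simp
    ring
  have key : (c - μ * c ^ 2) * ‖d‖ ^ 2 ≤ F a - F b - ⟪P b, a - b⟫ := by
    linear_combination h1 + h2 - c * hd
  calc ‖P a - P b‖ ^ 2 = 4 * μ * (c - μ * c ^ 2) * ‖d‖ ^ 2 := by rw [hc, one_mul, norm_sub_rev]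
    _ ≤ 4 * μ * (F a - F b - ⟪P b, a - b⟫) := by
      rw [mul_assoc]
      exact mul_le_mul_of_nonneg_left key (by positivity)

theorem norm_sub_sq_le_two_mul_inner (hμ : 0 ≤ μ) (hlow : ∀ x y, ⟪P x, y - x⟫ ≤ F y - F x)
    (hup : ∀ x y, F y - F x ≤ ⟪P x, y - x⟫ + μ * ‖y - x‖ ^ 2) (x y : E) :
    ‖P x - P y‖ ^ 2 ≤ 2 * μ * ⟪P x - P y, x - y⟫ := by
  have hpos : ∀ m, μ < m → ‖P x - P y‖ ^ 2 ≤ 2 * m * ⟪P x - P y, x - y⟫ := by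
    intro m hm
    have hup' : ∀ x y, F y - F x ≤ ⟪P x, y - x⟫ + m * ‖y - x‖ ^ 2 := fun x y => by
      nlinarith [hup x y, sq_nonneg ‖y - x‖]
    have hxy := norm_sub_sq_le_four_mul_of_pos (hμ.trans_lt hm) hlow hup' x y
    have hyx := norm_sub_sq_le_four_mul_of_pos (hμ.trans_lt hm) hlow hup' y x
    have hinner : ⟪P x - P y, x - y⟫ = -⟪P y, x - y⟫ - ⟪P x, y - x⟫ := by
      rw [inner_sub_left, ← neg_sub x y, inner_neg_right]
      ring
    rw [norm_sub_rev] at hyx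
    linear_combination (hxy + hyx) / 2 - 2 * m * hinner
  have hlim : Tendsto (fun m => 2 * m * ⟪P x - P y, x - y⟫) (𝓝[>] μ)
      (𝓝 (2 * μ * ⟪P x - P y, x - y⟫)) :=
    ((by fun_prop : Continuous fun m : ℝ => 2 * m * ⟪P x - P y, x - y⟫).tendsto μ).mono_left
      nhdsWithin_le_nhds
  exact ge_of_tendsto hlim (eventually_nhdsWithin_of_forall hpos)

lemma norm_sub_smul_le_of_norm_sq_le {d h : E} (hμ : 0 ≤ μ) (hd : ‖d‖ ^ 2 ≤ 2 * μ * ⟪d, h⟫) :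
    ‖d - μ • h‖ ≤ μ * ‖h‖ := by
  refine (pow_le_pow_iff_left₀ (norm_nonneg _) (by positivity) two_ne_zero).mp ?_
  rw [norm_sub_sq_real, real_inner_smul_right, norm_smul, Real.norm_of_nonneg hμ]
  linarith

end Cocoercive

theorem differentiable_of_convexOn_add_half_mul_norm_sq {E : Type*} [NormedAddCommGroup E]
    [InnerProductSpace ℝ E] [FiniteDimensional ℝ E] {u : E → ℝ} {lam : ℝ}
    (hF : ConvexOn ℝ univ fun x => u x + lam / 2 * ‖x‖ ^ 2)
    (hG : ConvexOn ℝ univ fun x => -u x + lam / 2 * ‖x‖ ^ 2) : Differentiable ℝ u := fun x => by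
  have hsum : ((fun x => u x + lam / 2 * ‖x‖ ^ 2) + fun x => -u x + lam / 2 * ‖x‖ ^ 2)
      = fun x => lam * ‖x‖ ^ 2 := by
    ext
    simp only [Pi.add_apply]
    ring
  have hsq := (hasStrictFDerivAt_norm_sq x).differentiableAt
  have hFx := hF.differentiableAt_of_add hG (by rw [hsum]; exact hsq.const_mul lam)
  rw [show u = (fun x => u x + lam / 2 * ‖x‖ ^ 2) - fun x => lam / 2 * ‖x‖ ^ 2 by
    ext
    simp only [Pi.sub_apply, add_sub_cancel_right]]
  exact hFx.sub (hsq.const_mul (lam / 2))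

section Gradient

variable {E : Type*} [NormedAddCommGroup E] [InnerProductSpace ℝ E] [CompleteSpace E]
  {f g : E → ℝ} {P : E → E} {p x : E}

lemma HasGradientAt.neg (h : HasGradientAt f p x) : HasGradientAt (fun y => -f y) (-p) x := by
  rw [hasGradientAt_iff_hasFDerivAt, map_neg]
  exact h.hasFDerivAt.neg

lemma HasGradientAt.add_half_mul_norm_sq (h : HasGradientAt f p x) (c : ℝ) :
    HasGradientAt (fun y => f y + c / 2 * ‖y‖ ^ 2) (p + c • x) x := by
  rw [hasGradientAt_iff_hasFDerivAt]
  refine (h.hasFDerivAt.add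
    ((hasStrictFDerivAt_norm_sq x).hasFDerivAt.const_mul (c / 2))).congr_fderiv ?_
  ext v
  simp only [add_apply, InnerProductSpace.toDual_apply_apply,
    smul_apply, coe_innerSL_apply, nsmul_eq_mul, Nat.cast_ofNat, smul_eq_mul,
    map_add, map_smul, add_right_inj]
  ring

lemma ConvexOn.inner_le_sub_of_hasGradientAt (hf : ConvexOn ℝ univ f) (h : HasGradientAt f p x)
    (y : E) : ⟪p, y - x⟫ ≤ f y - f x := by
  simpa using hf.le_sub_of_hasFDerivAt h.hasFDerivAt (y - x)

lemma ConvexOn.sub_le_inner_add_of_add_eq {c : ℝ} (hg : ConvexOn ℝ univ g)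
    (hfg : ∀ y, f y + g y = c * ‖y‖ ^ 2) (hf : HasGradientAt f p x) (y : E) :
    f y - f x ≤ ⟪p, y - x⟫ + c * ‖y - x‖ ^ 2 := by
  have hg' : HasGradientAt g (-p + (2 * c) • x) x := by
    convert hf.neg.add_half_mul_norm_sq (2 * c) using 1
    ext y
    linarith [hfg y]
  have := hg.inner_le_sub_of_hasGradientAt hg' y
  have hy : ‖y‖ ^ 2 = ‖x‖ ^ 2 + 2 * ⟪x, y - x⟫ + ‖y - x‖ ^ 2 := by
    rw [← norm_add_sq_real, add_sub_cancel]
  rw [inner_add_left, inner_neg_left, real_inner_smul_left] at this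
  linear_combination this + hfg y - hfg x + c * hy

theorem convexOn_univ_of_hasGradientAt_of_monotone (hf : ∀ x, HasGradientAt f (P x) x)
    (hP : ∀ x y, 0 ≤ ⟪P x - P y, x - y⟫) : ConvexOn ℝ univ f := by
  refine ⟨convex_univ, fun x _ y _ a b ha hb hab => ?_⟩
  have hφ : ∀ t : ℝ, HasDerivAt (fun s : ℝ => f (x + s • (y - x))) ⟪P (x + t • (y - x)), y - x⟫ t :=
    fun t => (hf _).hasFDerivAt.hasDerivAt_comp_add_smul
  have hmono : Monotone (deriv fun s : ℝ => f (x + s • (y - x))) := by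
    intro s t hst
    rw [(hφ s).deriv, (hφ t).deriv, ← sub_nonneg, ← inner_sub_left]
    have := hP (x + t • (y - x)) (x + s • (y - x))
    rw [show x + t • (y - x) - (x + s • (y - x)) = (t - s) • (y - x) by module,
      real_inner_smul_right] at this
    rcases hst.eq_or_lt with rfl | hlt
    · simp
    · exact (mul_nonneg_iff_of_pos_left (sub_pos.2 hlt)).1 this
  have := (hmono.convexOn_univ_of_deriv fun t => (hφ t).differentiableAt).2
    (mem_univ 0) (mem_univ 1) ha hb hab
  simp only [smul_eq_mul, mul_zero, mul_one, zero_add, zero_smul, add_zero, one_smul,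
    add_sub_cancel] at this
  rwa [smul_eq_mul, smul_eq_mul, show a • x + b • y = x + b • (y - x) by
    rw [eq_sub_of_add_eq hab]; module]

theorem convexOn_add_half_mul_norm_sq_of_lipschitz {lam : ℝ} (hf : ∀ x, HasGradientAt f (P x) x)
    (hP : ∀ x y, ‖P x - P y‖ ≤ lam * ‖x - y‖) :
    ConvexOn ℝ univ (fun x => f x + lam / 2 * ‖x‖ ^ 2) := by
  refine convexOn_univ_of_hasGradientAt_of_monotone (fun x => (hf x).add_half_mul_norm_sq lam)
    fun x y => ?_
  rw [show P x + lam • x - (P y + lam • y) = (P x - P y) + lam • (x - y) by module,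
    inner_add_left, real_inner_smul_left, real_inner_self_eq_norm_sq]
  nlinarith [neg_le_of_abs_le (abs_real_inner_le_norm (P x - P y) (x - y)), hP x y,
    norm_nonneg (x - y)]

theorem norm_gradient_sub_le_of_convexOn_add_half_mul_norm_sq [FiniteDimensional ℝ E]
    {u : E → ℝ} {lam : ℝ} (hlam : 0 ≤ lam)
    (hF : ConvexOn ℝ univ fun x => u x + lam / 2 * ‖x‖ ^ 2)
    (hG : ConvexOn ℝ univ fun x => -u x + lam / 2 * ‖x‖ ^ 2) (x y : E) :
    ‖gradient u x - gradient u y‖ ≤ lam * ‖x - y‖ := by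
  have hu := differentiable_of_convexOn_add_half_mul_norm_sq hF hG
  have hgrad : ∀ x, HasGradientAt (fun x => u x + lam / 2 * ‖x‖ ^ 2)
      (gradient u x + lam • x) x :=
    fun x => (hu x).hasGradientAt.add_half_mul_norm_sq lam
  have hco := norm_sub_sq_le_two_mul_inner hlam
    (fun x y => hF.inner_le_sub_of_hasGradientAt (hgrad x) y)
    (fun x y => hG.sub_le_inner_add_of_add_eq (fun y => by ring) (hgrad x) y) x y
  convert norm_sub_smul_le_of_norm_sq_le hlam hco using 2
  module

end Gradient

theorem stmt_9 {n : ℕ} (u : EuclideanSpace ℝ (Fin n) → ℝ) (lam : ℝ) (hlam : 0 ≤ lam) :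
    (Differentiable ℝ u ∧
      ∀ x y : EuclideanSpace ℝ (Fin n),
        ‖gradient u x - gradient u y‖ ≤ lam * ‖x - y‖) ↔
    (ConvexOn ℝ Set.univ (fun x => u x + lam / 2 * ‖x‖ ^ 2) ∧
     ConvexOn ℝ Set.univ (fun x => -u x + lam / 2 * ‖x‖ ^ 2)) := by
  constructor
  · rintro ⟨hu, hL⟩
    have hgrad : ∀ x, HasGradientAt u (gradient u x) x := fun x => (hu x).hasGradientAt
    exact ⟨convexOn_add_half_mul_norm_sq_of_lipschitz hgrad hL,
      convexOn_add_half_mul_norm_sq_of_lipschitz (fun x => (hgrad x).neg)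
        fun x y => by simpa only [neg_sub_neg, norm_sub_rev] using hL x y⟩
  · rintro ⟨hF, hG⟩
    exact ⟨differentiable_of_convexOn_add_half_mul_norm_sq hF hG,
      norm_gradient_sub_le_of_convexOn_add_half_mul_norm_sq hlam hF hG⟩
end

section
/- Let u be λ-quasi-convex on a neighborhood of x in ℝⁿ. If (p, A) is an upper contact jet for u at x (i.e. u(y) ≤ u(x) + ⟨p, y−x⟩ + ½⟨A(y−x), y−x⟩ for y near x), then u is differentiable at x and p = Du(x); in particular the gradient component of every upper contact jet of u at x is the same. -/
open scoped RealInnerProductSpace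
open Filter Topology Asymptotics

set_option maxHeartbeats 1000000 in
theorem stmt_11 {n : ℕ} {u : EuclideanSpace ℝ (Fin n) → ℝ}
    {x : EuclideanSpace ℝ (Fin n)} {lam : ℝ} (hlam : 0 ≤ lam)
    {U : Set (EuclideanSpace ℝ (Fin n))} (hU : U ∈ 𝓝 x) (hUc : Convex ℝ U)
    (hqc : ConvexOn ℝ U (fun y => u y + lam / 2 * ‖y‖ ^ 2))
    (p : EuclideanSpace ℝ (Fin n))
    (A : EuclideanSpace ℝ (Fin n) →L[ℝ] EuclideanSpace ℝ (Fin n))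
    (hjet : ∀ᶠ y in 𝓝 x,
      u y ≤ u x + ⟪p, y - x⟫ + (1/2) * ⟪A (y - x), y - x⟫) :
    HasGradientAt u p x := by
  set K : ℝ := ‖A‖ / 2 + lam with hKdef
  have hK0 : 0 ≤ K := by positivity
  set W : Set (EuclideanSpace ℝ (Fin n)) :=
    {y | u y ≤ u x + ⟪p, y - x⟫ + (1/2) * ⟪A (y - x), y - x⟫} ∩ U with hWdef
  have hW : W ∈ 𝓝 x := Filter.inter_mem hjet hU
  have hrefl : Continuous fun y : EuclideanSpace ℝ (Fin n) => x + (x - y) :=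
    continuous_const.add (continuous_const.sub continuous_id)
  have hW' : W ∩ (fun y => x + (x - y)) ⁻¹' W ∈ 𝓝 x := by
    refine Filter.inter_mem hW ?_
    have hca : ContinuousAt (fun y : EuclideanSpace ℝ (Fin n) => x + (x - y)) x :=
      hrefl.continuousAt
    have hx : x + (x - x) = x := by abel
    exact hca.preimage_mem_nhds (by rw [hx]; exact hW)
  -- key two-sided estimate
  have key : ∀ y ∈ W ∩ (fun y => x + (x - y)) ⁻¹' W,
      |u y - u x - ⟪p, y - x⟫| ≤ K * ‖y - x‖ ^ 2 := by
    rintro y ⟨⟨hjy, hyU⟩, hjz, hzU⟩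
    set z : EuclideanSpace ℝ (Fin n) := x + (x - y) with hz
    have hAh : |⟪A (y - x), y - x⟫| ≤ ‖A‖ * ‖y - x‖ ^ 2 := by
      calc |⟪A (y - x), y - x⟫| ≤ ‖A (y - x)‖ * ‖y - x‖ := abs_real_inner_le_norm _ _
        _ ≤ ‖A‖ * ‖y - x‖ * ‖y - x‖ :=
          mul_le_mul_of_nonneg_right (A.le_opNorm _) (norm_nonneg _)
        _ = ‖A‖ * ‖y - x‖ ^ 2 := by ring
    have hzx : z - x = -(y - x) := by rw [hz]; abel
    have hjz' : u z ≤ u x - ⟪p, y - x⟫ + (1/2) * ⟪A (y - x), y - x⟫ := by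
      have h : u z ≤ u x + ⟪p, z - x⟫ + (1/2) * ⟪A (z - x), z - x⟫ := hjz
      rw [hzx, map_neg, inner_neg_neg, inner_neg_right] at h
      linarith
    have hmid : (1/2 : ℝ) • y + (1/2 : ℝ) • z = x := by
      rw [hz]; module
    have hconv := hqc.2 hyU hzU (by norm_num : (0:ℝ) ≤ 1/2)
      (by norm_num : (0:ℝ) ≤ 1/2) (by norm_num : (1/2:ℝ) + 1/2 = 1)
    simp only [smul_eq_mul] at hconv
    rw [hmid, ← hz] at hconv
    have hy2 : ‖y‖ ^ 2 = ‖x‖ ^ 2 + 2 * ⟪x, y - x⟫ + ‖y - x‖ ^ 2 := by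
      conv_lhs => rw [show y = x + (y - x) by abel]
      rw [norm_add_sq_real]
    have hz2 : ‖z‖ ^ 2 = ‖x‖ ^ 2 - 2 * ⟪x, y - x⟫ + ‖y - x‖ ^ 2 := by
      conv_lhs => rw [show z = x - (y - x) by rw [hz]; abel]
      rw [norm_sub_sq_real]
    have hA' := abs_le.1 hAh
    have hsum : ‖y‖ ^ 2 + ‖z‖ ^ 2 = 2 * ‖x‖ ^ 2 + 2 * ‖y - x‖ ^ 2 := by
      linarith [hy2, hz2]
    have hlam2 : lam / 2 * ‖y‖ ^ 2 + lam / 2 * ‖z‖ ^ 2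
        = lam * ‖x‖ ^ 2 + lam * ‖y - x‖ ^ 2 := by
      linear_combination (lam / 2) * hsum
    have hjy' : u y ≤ u x + ⟪p, y - x⟫ + (1/2) * ⟪A (y - x), y - x⟫ := hjy
    have hlr : 0 ≤ lam * ‖y - x‖ ^ 2 := mul_nonneg hlam (sq_nonneg _)
    rw [abs_le, hKdef]
    constructor
    · linarith [hconv, hjz', hlam2, hA'.1, hlr]
    · linarith [hjy', hA'.2, hlr]
  -- conclude via little-o
  rw [hasGradientAt_iff_isLittleO, isLittleO_iff]
  intro c hc
  have hball : Metric.ball x (c / (K + 1)) ∈ 𝓝 x :=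
    Metric.ball_mem_nhds x (by positivity)
  filter_upwards [hW', hball] with y hy hby
  have h1 := key y hy
  have h2 : ‖y - x‖ < c / (K + 1) := by
    rw [Metric.mem_ball, dist_eq_norm] at hby; exact hby
  have hn : (0:ℝ) ≤ ‖y - x‖ := norm_nonneg _
  have hcK : K * ‖y - x‖ ≤ c := by
    have := mul_le_mul_of_nonneg_left h2.le hK0
    calc K * ‖y - x‖ ≤ K * (c / (K + 1)) := this
      _ ≤ c := by
        rw [div_eq_inv_mul, ← mul_assoc]
        nlinarith [mul_pos hc (by positivity : (0:ℝ) < (K+1)⁻¹),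
          mul_inv_cancel₀ (by positivity : (K:ℝ) + 1 ≠ 0)]
  calc ‖u y - u x - ⟪p, y - x⟫‖ = |u y - u x - ⟪p, y - x⟫| := rfl
    _ ≤ K * ‖y - x‖ ^ 2 := h1
    _ = (K * ‖y - x‖) * ‖y - x‖ := by ring
    _ ≤ c * ‖y - x‖ := mul_le_mul_of_nonneg_right hcK hn
    _ = c * ‖(fun y => y - x) y‖ := rfl
end

section
/- Suppose u and v are λ-quasi-convex on a neighborhood of x ∈ ℝⁿ, and the sum w = u + v has an upper contact jet (p, A) at x. Then x is an upper contact point for both u and v; in particular u and v are both differentiable at x and p = Du(x) + Dv(x). -/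
/-! With `φ = u + λ/2 ‖·‖²` and `ψ = v + λ/2 ‖·‖²` convex near `x`, supporting hyperplanes of `φ`
and `ψ` at `x` put lower paraboloids `u x + ⟪q_u, y - x⟫ - λ/2 ‖y - x‖²` under `u` and likewise
under `v`. Subtracting the paraboloid of `v` from the upper contact jet of `u + v` gives an upper
contact jet of `u`, and symmetrically for `v`. A function touched at `x` from below by a paraboloid
and from above by a jet is differentiable at `x`, with both slopes equal to its gradient; for `u`
this reads `q_u = p - q_v`. -/

open scoped RealInnerProductSpace
open Filter Topology

section Subgradient

variable {E : Type*} [NormedAddCommGroup E] [NormedSpace ℝ E] [FiniteDimensional ℝ E]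

theorem ConvexOn.exists_subgradient_of_isOpen {C : Set E} {f : E → ℝ} {x : E} (hC : IsOpen C)
    (hf : ConvexOn ℝ C f) (hx : x ∈ C) : ∃ L : StrongDual ℝ E, ∀ y ∈ C, f x + L (y - x) ≤ f y := by
  set s : Set (E × ℝ) := {z | z.1 ∈ C ∧ f z.1 < z.2}
  have hs_open : IsOpen s := by
    have hcont : ContinuousOn (fun z : E × ℝ => f z.1 - z.2) (C ×ˢ Set.univ) :=
      ((hf.continuousOn hC).comp continuousOn_fst fun z hz => hz.1).sub continuousOn_snd
    convert hcont.isOpen_inter_preimage (hC.prod isOpen_univ) (isOpen_Iio (a := 0)) using 1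
    ext z
    simp [s, sub_neg]
  obtain ⟨ℓ, hℓ⟩ := geometric_hahn_banach_open_point hf.convex_strict_epigraph hs_open
    (fun h => lt_irrefl _ h.2 : (x, f x) ∉ s)
  set L : StrongDual ℝ E := ℓ.comp (.inl ℝ E ℝ)
  set b : ℝ := ℓ (0, 1)
  have hℓ_apply (y : E) (t : ℝ) : ℓ (y, t) = L y + t * b := by
    rw [← smul_eq_mul, ← map_smul, ← ContinuousLinearMap.comp_inl_add_comp_inr]
    simp [L]
  have hsep (y : E) (hy : y ∈ C) (t : ℝ) (ht : f y < t) : L y + t * b < L x + f x * b := by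
    simpa only [hℓ_apply] using hℓ (y, t) ⟨hy, ht⟩
  have hb : b < 0 := by linarith [hsep x hx (f x + 1) (by linarith)]
  refine ⟨(-b)⁻¹ • L, fun y hy => ?_⟩
  -- letting the height `t` decrease to `f y` in `hsep`
  have hle : f x + (L y - L x) / (-b) ≤ f y := by
    refine le_of_forall_gt_imp_ge_of_dense fun t ht => ?_
    rw [← le_sub_iff_add_le', div_le_iff₀ (by linarith)]
    linarith [hsep y hy t ht]
  simpa [div_eq_inv_mul] using hle

end Subgradient

variable {E : Type*} [NormedAddCommGroup E] [InnerProductSpace ℝ E]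

def IsUpperContactJet (w : E → ℝ) (x p : E) (A : E →L[ℝ] E) : Prop :=
  ∀ᶠ y in 𝓝 x, w y ≤ w x + ⟪p, y - x⟫ + (1/2) * ⟪A (y - x), y - x⟫

def HasLowerParaboloidAt (w : E → ℝ) (x q : E) (c : ℝ) : Prop :=
  ∀ᶠ y in 𝓝 x, w x + ⟪q, y - x⟫ - c / 2 * ‖y - x‖ ^ 2 ≤ w y

theorem exists_lower_paraboloid_of_convexOn_add_sq [FiniteDimensional ℝ E] {U : Set E}
    {f : E → ℝ} {x : E} {c : ℝ} (hU : U ∈ 𝓝 x)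
    (hf : ConvexOn ℝ U (fun y => f y + c / 2 * ‖y‖ ^ 2)) :
    ∃ q : E, HasLowerParaboloidAt f x q c := by
  obtain ⟨L, hL⟩ := (hf.subset interior_subset hf.1.interior).exists_subgradient_of_isOpen
    isOpen_interior (mem_interior_iff_mem_nhds.2 hU)
  refine ⟨(InnerProductSpace.toDual ℝ E).symm L - c • x, ?_⟩
  filter_upwards [interior_mem_nhds.2 hU] with y hy
  have hsq : ‖y‖ ^ 2 = ‖x‖ ^ 2 + 2 * ⟪x, y - x⟫ + ‖y - x‖ ^ 2 := by
    simpa using norm_add_sq_real x (y - x)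
  have hLy := hL y hy
  rw [hsq] at hLy
  rw [inner_sub_left, real_inner_smul_left, InnerProductSpace.toDual_symm_apply]
  linarith

theorem IsUpperContactJet.of_add_of_lower_paraboloid {w₁ w₂ : E → ℝ} {x p q : E}
    {A : E →L[ℝ] E} {c : ℝ}
    (hjet : IsUpperContactJet (fun y => w₁ y + w₂ y) x p A)
    (hw₂ : HasLowerParaboloidAt w₂ x q c) :
    IsUpperContactJet w₁ x (p - q) (A + c • ContinuousLinearMap.id ℝ E) := by
  filter_upwards [hjet, hw₂] with y hjet hw₂
  rw [add_apply, smul_apply, ContinuousLinearMap.id_apply, inner_add_left, real_inner_smul_left,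
    real_inner_self_eq_norm_sq, inner_sub_left]
  linarith

theorem inner_apply_self_le_opNorm_mul_sq (A : E →L[ℝ] E) (h : E) :
    ⟪A h, h⟫ ≤ ‖A‖ * ‖h‖ ^ 2 :=
  calc ⟪A h, h⟫ ≤ ‖A h‖ * ‖h‖ := real_inner_le_norm _ _
    _ ≤ ‖A‖ * ‖h‖ * ‖h‖ := by gcongr; exact A.le_opNorm h
    _ = ‖A‖ * ‖h‖ ^ 2 := by ring

theorem eq_zero_of_eventually_inner_le_sq {x d : E} {C : ℝ}
    (h : ∀ᶠ y in 𝓝 x, ⟪d, y - x⟫ ≤ C * ‖y - x‖ ^ 2) : d = 0 := by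
  have hline : Tendsto (fun t : ℝ => x + t • d) (𝓝[>] 0) (𝓝 x) := by
    have : Continuous fun t : ℝ => x + t • d := by fun_prop
    simpa using (this.tendsto 0).mono_left nhdsWithin_le_nhds
  -- along the ray `x + t • d` the hypothesis reads `t ‖d‖² ≤ C t² ‖d‖²`
  have hbound : ∀ᶠ t in 𝓝[>] (0 : ℝ), ‖d‖ ^ 2 ≤ C * t * ‖d‖ ^ 2 := by
    filter_upwards [hline.eventually h, self_mem_nhdsWithin] with t ht (htpos : 0 < t)
    rw [add_sub_cancel_left, real_inner_smul_right, real_inner_self_eq_norm_sq, norm_smul,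
      Real.norm_of_nonneg htpos.le] at ht
    nlinarith
  have hlim : Tendsto (fun t : ℝ => C * t * ‖d‖ ^ 2) (𝓝[>] 0) (𝓝 0) := by
    have : Continuous fun t : ℝ => C * t * ‖d‖ ^ 2 := by fun_prop
    simpa using (this.tendsto 0).mono_left nhdsWithin_le_nhds
  have := ge_of_tendsto hlim hbound
  simpa using this.antisymm (sq_nonneg ‖d‖)

theorem hasGradientAt_of_eventually_abs_le_sq [CompleteSpace E] {f : E → ℝ} {x q : E} {C : ℝ}
    (h : ∀ᶠ y in 𝓝 x, |f y - f x - ⟪q, y - x⟫| ≤ C * ‖y - x‖ ^ 2) : HasGradientAt f q x := by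
  rw [hasGradientAt_iff_isLittleO]
  have hbig : (fun y => f y - f x - ⟪q, y - x⟫) =O[𝓝 x] fun y => ‖y - x‖ ^ 2 :=
    Asymptotics.IsBigO.of_bound C (by simpa using h)
  exact hbig.trans_isLittleO ((Asymptotics.isLittleO_norm_pow_id one_lt_two).comp_tendsto
    (tendsto_sub_nhds_zero_iff.2 tendsto_id))

theorem IsUpperContactJet.eq_and_hasGradientAt_of_lower_paraboloid [CompleteSpace E] {w : E → ℝ}
    {x p q : E} {A : E →L[ℝ] E} {c : ℝ} (hjet : IsUpperContactJet w x p A)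
    (hlow : HasLowerParaboloidAt w x q c) :
    p = q ∧ HasGradientAt w q x := by
  have hq : q - p = 0 := by
    refine eq_zero_of_eventually_inner_le_sq (x := x) (C := ‖A‖ / 2 + c / 2) ?_
    filter_upwards [hjet, hlow] with y hjet hlow
    rw [inner_sub_left]
    linarith [inner_apply_self_le_opNorm_mul_sq A (y - x)]
  rw [sub_eq_zero] at hq
  subst hq
  refine ⟨rfl, hasGradientAt_of_eventually_abs_le_sq (C := ‖A‖ / 2 + |c| / 2) ?_⟩
  filter_upwards [hjet, hlow] with y hjet hlow
  rw [abs_le]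
  have hA := inner_apply_self_le_opNorm_mul_sq A (y - x)
  have hA₀ : 0 ≤ ‖A‖ * ‖y - x‖ ^ 2 := by positivity
  have hc := mul_le_mul_of_nonneg_right (neg_abs_le c) (sq_nonneg ‖y - x‖)
  have hc' := mul_le_mul_of_nonneg_right (le_abs_self c) (sq_nonneg ‖y - x‖)
  constructor <;> linarith

theorem stmt_12_general {n : ℕ} {u v : EuclideanSpace ℝ (Fin n) → ℝ}
    {x : EuclideanSpace ℝ (Fin n)} {lam : ℝ}
    {U : Set (EuclideanSpace ℝ (Fin n))} (hU : U ∈ 𝓝 x)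
    (hu : ConvexOn ℝ U (fun y => u y + lam / 2 * ‖y‖ ^ 2))
    (hv : ConvexOn ℝ U (fun y => v y + lam / 2 * ‖y‖ ^ 2))
    (p : EuclideanSpace ℝ (Fin n))
    (A : EuclideanSpace ℝ (Fin n) →L[ℝ] EuclideanSpace ℝ (Fin n))
    (hjet : ∀ᶠ y in 𝓝 x,
      u y + v y ≤ (u x + v x) + ⟪p, y - x⟫ + (1/2) * ⟪A (y - x), y - x⟫) :
    (∃ (pu : EuclideanSpace ℝ (Fin n))
        (Au : EuclideanSpace ℝ (Fin n) →L[ℝ] EuclideanSpace ℝ (Fin n)),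
        ∀ᶠ y in 𝓝 x,
          u y ≤ u x + ⟪pu, y - x⟫ + (1/2) * ⟪Au (y - x), y - x⟫) ∧
    (∃ (pv : EuclideanSpace ℝ (Fin n))
        (Av : EuclideanSpace ℝ (Fin n) →L[ℝ] EuclideanSpace ℝ (Fin n)),
        ∀ᶠ y in 𝓝 x,
          v y ≤ v x + ⟪pv, y - x⟫ + (1/2) * ⟪Av (y - x), y - x⟫) ∧
    (∃ (pu pv : EuclideanSpace ℝ (Fin n)),
        HasGradientAt u pu x ∧ HasGradientAt v pv x ∧ p = pu + pv) := by
  obtain ⟨qu, hqu⟩ := exists_lower_paraboloid_of_convexOn_add_sq hU hu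
  obtain ⟨qv, hqv⟩ := exists_lower_paraboloid_of_convexOn_add_sq hU hv
  have hjet_vu : IsUpperContactJet (fun y => v y + u y) x p A := hjet.mono fun y hy => by linarith
  have hju : IsUpperContactJet u x (p - qv) _ :=
    IsUpperContactJet.of_add_of_lower_paraboloid hjet hqv
  have hjv : IsUpperContactJet v x (p - qu) _ := hjet_vu.of_add_of_lower_paraboloid hqu
  obtain ⟨hpu, hgu⟩ := hju.eq_and_hasGradientAt_of_lower_paraboloid hqu
  obtain ⟨-, hgv⟩ := hjv.eq_and_hasGradientAt_of_lower_paraboloid hqv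
  exact ⟨⟨_, _, hju⟩, ⟨_, _, hjv⟩, qu, qv, hgu, hgv, by rw [← hpu, sub_add_cancel]⟩

theorem stmt_12 {n : ℕ} {u v : EuclideanSpace ℝ (Fin n) → ℝ}
    {x : EuclideanSpace ℝ (Fin n)} {lam : ℝ} (hlam : 0 ≤ lam)
    {U : Set (EuclideanSpace ℝ (Fin n))} (hU : U ∈ 𝓝 x) (hUc : Convex ℝ U)
    (hu : ConvexOn ℝ U (fun y => u y + lam / 2 * ‖y‖ ^ 2))
    (hv : ConvexOn ℝ U (fun y => v y + lam / 2 * ‖y‖ ^ 2))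
    (p : EuclideanSpace ℝ (Fin n))
    (A : EuclideanSpace ℝ (Fin n) →L[ℝ] EuclideanSpace ℝ (Fin n))
    (hjet : ∀ᶠ y in 𝓝 x,
      u y + v y ≤ (u x + v x) + ⟪p, y - x⟫ + (1/2) * ⟪A (y - x), y - x⟫) :
    (∃ (pu : EuclideanSpace ℝ (Fin n))
        (Au : EuclideanSpace ℝ (Fin n) →L[ℝ] EuclideanSpace ℝ (Fin n)),
        ∀ᶠ y in 𝓝 x,
          u y ≤ u x + ⟪pu, y - x⟫ + (1/2) * ⟪Au (y - x), y - x⟫) ∧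
    (∃ (pv : EuclideanSpace ℝ (Fin n))
        (Av : EuclideanSpace ℝ (Fin n) →L[ℝ] EuclideanSpace ℝ (Fin n)),
        ∀ᶠ y in 𝓝 x,
          v y ≤ v x + ⟪pv, y - x⟫ + (1/2) * ⟪Av (y - x), y - x⟫) ∧
    (∃ (pu pv : EuclideanSpace ℝ (Fin n)),
        HasGradientAt u pu x ∧ HasGradientAt v pv x ∧ p = pu + pv) :=
  stmt_12_general hU hu hv p A hjet
end

section
/- Let K ⊆ ℝⁿ be compact and u ∈ USC(K) bounded below, with oscillation osc_K u = sup_K u − inf_K u. Fix r > 0, set δ = √(2r·osc_K u), and suppose v ∈ K satisfies d(v, ∂K) > δ. Then there exists a point x ∈ K with |x − v| ≤ δ such that the quadratic φ(y) = c + |y − v|²/(2r), with c = sup_{z∈K}(u(z) − |z−v|²/(2r)), satisfies u ≤ φ on K with equality at x; i.e. the set of contact points of the upper contact quadratic of radius r and vertex v is nonempty, compact, and contained in the closed ball of radius δ around v. -/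
open scoped RealInnerProductSpace

/-!
The contact points of the upper contact quadratic of vertex `v` are exactly the maximisers
on `K` of the upper semicontinuous function `u - ‖· - v‖² / (2r)`, so they form a nonempty
compact set.
At a contact point `x` the contact value `c` is at least `u v` (test the supremum at `z = v`),
hence `‖x - v‖² / (2r) = u x - c ≤ u x - u v ≤ osc_K u`.
-/

open Set Metric

section Maximizers

variable {α γ : Type*} [TopologicalSpace α] [ConditionallyCompleteLinearOrder γ]
  {g : α → γ} {s : Set α}

theorem UpperSemicontinuousOn.nonempty_setOf_eq_sSup (hg : UpperSemicontinuousOn g s)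
    (hs : IsCompact s) (hne : s.Nonempty) : {x ∈ s | g x = sSup (g '' s)}.Nonempty := by
  obtain ⟨x, hx, hmax⟩ := hg.exists_isMaxOn hne hs
  exact ⟨x, hx, (IsGreatest.csSup_eq ⟨mem_image_of_mem g hx, forall_mem_image.2 hmax⟩).symm⟩

theorem UpperSemicontinuousOn.isCompact_setOf_eq_sSup [TopologicalSpace γ] [OrderTopology γ]
    [Nonempty γ] (hg : UpperSemicontinuousOn g s) (hs : IsCompact s) :
    IsCompact {x ∈ s | g x = sSup (g '' s)} := by
  have hbdd : BddAbove (g '' s) := hg.bddAbove_of_isCompact hs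
  have hsup : {x ∈ s | g x = sSup (g '' s)} = s ∩ g ⁻¹' Ici (sSup (g '' s)) :=
    sep_ext_iff.mpr fun x hx => ((le_csSup hbdd (mem_image_of_mem g hx)).ge_iff_eq).symm
  exact hsup ▸ hg.isCompact_inter_preimage_Ici hs _

end Maximizers

theorem mem_closedBall_sqrt_of_sq_div_le {E : Type*} [SeminormedAddCommGroup E] {x v : E}
    {r M : ℝ} (hr : 0 < r) (h : ‖x - v‖ ^ 2 / (2 * r) ≤ M) :
    x ∈ closedBall v √(2 * r * M) := by
  have hsq : ‖x - v‖ ^ 2 ≤ 2 * r * M := by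
    rwa [div_le_iff₀ (by positivity), mul_comm] at h
  rw [mem_closedBall, dist_eq_norm, ← abs_norm]
  exact Real.abs_le_sqrt hsq

theorem stmt_17_general {n : ℕ} {K : Set (EuclideanSpace ℝ (Fin n))} (hK : IsCompact K)
    {u : EuclideanSpace ℝ (Fin n) → ℝ} (husc : UpperSemicontinuousOn u K)
    (hbb : BddBelow (u '' K)) {r : ℝ} (hr : 0 < r)
    {v : EuclideanSpace ℝ (Fin n)} (hv : v ∈ K) :
    ({x ∈ K | u x =
        sSup ((fun z => u z - ‖z - v‖ ^ 2 / (2 * r)) '' K) +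
          ‖x - v‖ ^ 2 / (2 * r)}).Nonempty ∧
    IsCompact {x ∈ K | u x =
        sSup ((fun z => u z - ‖z - v‖ ^ 2 / (2 * r)) '' K) +
          ‖x - v‖ ^ 2 / (2 * r)} ∧
    {x ∈ K | u x =
        sSup ((fun z => u z - ‖z - v‖ ^ 2 / (2 * r)) '' K) +
          ‖x - v‖ ^ 2 / (2 * r)} ⊆
      Metric.closedBall v (Real.sqrt (2 * r * (sSup (u '' K) - sInf (u '' K)))) := by
  set g := fun z => u z - ‖z - v‖ ^ 2 / (2 * r)
  have hquad : Continuous fun z => -(‖z - v‖ ^ 2 / (2 * r)) := by fun_prop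
  have hg : UpperSemicontinuousOn g K :=
    husc.add hquad.continuousOn.upperSemicontinuousOn
  have hcontact : {x ∈ K | u x = sSup (g '' K) + ‖x - v‖ ^ 2 / (2 * r)} =
      {x ∈ K | g x = sSup (g '' K)} :=
    sep_ext_iff.mpr fun _ _ => sub_eq_iff_eq_add.symm
  rw [hcontact]
  refine ⟨hg.nonempty_setOf_eq_sSup hK ⟨v, hv⟩, hg.isCompact_setOf_eq_sSup hK, ?_⟩
  rintro x ⟨hx, hgx⟩
  have hvertex : u v ≤ g x := by
    simpa [g, hgx] using le_csSup (hg.bddAbove_of_isCompact hK) (mem_image_of_mem g hv)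
  have hux : u x ≤ sSup (u '' K) :=
    le_csSup (husc.bddAbove_of_isCompact hK) (mem_image_of_mem u hx)
  have huv : sInf (u '' K) ≤ u v := csInf_le hbb (mem_image_of_mem u hv)
  exact mem_closedBall_sqrt_of_sq_div_le hr (by simp only [g] at hvertex; linarith)

theorem stmt_17 {n : ℕ} {K : Set (EuclideanSpace ℝ (Fin n))} (hK : IsCompact K)
    {u : EuclideanSpace ℝ (Fin n) → ℝ} (husc : UpperSemicontinuousOn u K)
    (hbb : BddBelow (u '' K)) {r : ℝ} (hr : 0 < r)
    {v : EuclideanSpace ℝ (Fin n)} (hv : v ∈ K)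
    (hd : Real.sqrt (2 * r * (sSup (u '' K) - sInf (u '' K))) <
      Metric.infDist v (frontier K)) :
    ({x ∈ K | u x =
        sSup ((fun z => u z - ‖z - v‖ ^ 2 / (2 * r)) '' K) +
          ‖x - v‖ ^ 2 / (2 * r)}).Nonempty ∧
    IsCompact {x ∈ K | u x =
        sSup ((fun z => u z - ‖z - v‖ ^ 2 / (2 * r)) '' K) +
          ‖x - v‖ ^ 2 / (2 * r)} ∧
    {x ∈ K | u x =
        sSup ((fun z => u z - ‖z - v‖ ^ 2 / (2 * r)) '' K) +
          ‖x - v‖ ^ 2 / (2 * r)} ⊆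
      Metric.closedBall v (Real.sqrt (2 * r * (sSup (u '' K) - sInf (u '' K)))) :=
  stmt_17_general hK husc hbb hr hv
end
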